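/- Let T ≥ 1 and d ≥ 1, let U_1,…,U_T be unitary d×d complex matrices and U := U_T⋯U_1, let Π_in and Π_out be orthogonal projections on ℂ^d, and let 0 ≤ ε < 1 be such that |⟨η, Uξ⟩|² ≤ ε for all unit vectors ξ ∈ ker Π_in and η ∈ ker Π_out. Let ψ ∈ ℂ^{T+1} be a unit vector, and let H_prop be a positive semidefinite Hermitian matrix on ℂ^{T+1}⊗ℂ^d whose kernel is exactly { Σ_{t=0}^T ψ_t |t⟩⊗(U_t⋯U_1)ξ : ξ ∈ ℂ^d } and whose smallest nonzero eigenvalue Δ satisfies Δ ≤ 1. Then the smallest eigenvalue of H_prop + |0⟩⟨0|⊗Π_in + |T⟩⟨T|⊗Π_out is at least (Δ/4)·(1 − √ε)·min{|ψ_0|², |ψ_T|²}. -/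

import Mathlib

open Matrix Kronecker ComplexOrder

/-- The ordered product `U_t ⋯ U_1` (the empty product for `t = 0` is the identity). -/
noncomputable def prodU (d : ℕ) (U : ℕ → Matrix (Fin d) (Fin d) ℂ) (t : ℕ) :
    Matrix (Fin d) (Fin d) ℂ :=
  ((List.range t).reverse.map (fun i => U (i + 1))).prod

/-- The history state `Σ_t ψ_t |t⟩ ⊗ (U_t ⋯ U_1) ξ`. -/
noncomputable def historyState (T d : ℕ) (U : ℕ → Matrix (Fin d) (Fin d) ℂ)
    (ψ : Fin (T + 1) → ℂ) (ξ : Fin d → ℂ) : Fin (T + 1) × Fin d → ℂ :=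
  fun p => ψ p.1 * (prodU d U p.1.val).mulVec ξ p.2

/-!
Split `v = h + w` with `h ∈ ker H_prop` and `w ⟂ h`; the spectral gap gives
`⟨v, H_prop v⟩ ≥ Δ ‖w‖²`. Since `h` is the history state of some `ξ`, the penalty projection
`Q = |0⟩⟨0| ⊗ Π_in + |T⟩⟨T| ⊗ Π_out` satisfies
`‖Q h‖² = |ψ_0|² ‖Π_in ξ‖² + |ψ_T|² ‖Π_out U ξ‖² ≥ κ ‖h‖²` with
`κ = (1 - √ε) min(|ψ_0|², |ψ_T|²)`: the projections of `ξ` onto `ker Π_in` and `U⁻¹ ker Π_out`,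
subspaces whose angle has cosine at most `√ε`, have total squared length at most
`(1 + √ε) ‖ξ‖²`. Finally `‖Q v‖ ≥ ‖Q h‖ - ‖w‖` gives `κ ‖v‖² ≤ 4 (‖w‖² + ‖Q v‖²)`, and `Δ ≤ 1`
combines this with the bound on `⟨v, H_prop v⟩`.
-/

open scoped InnerProductSpace
open RCLike ComplexConjugate WithLp

section InnerProductSpace

variable {𝕜 E F : Type*} [RCLike 𝕜] [NormedAddCommGroup E] [InnerProductSpace 𝕜 E]

/- `x` and `y` are the orthogonal projections of `z` onto two subspaces containing them, and `c`
bounds the cosine of the angle between those subspaces. -/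
theorem norm_sq_add_norm_sq_le_of_inner_sub_eq_zero {x y z : E} (hx : ⟪x, z - x⟫_𝕜 = 0)
    (hy : ⟪y, z - y⟫_𝕜 = 0) {c : ℝ} (hc : 0 ≤ c) (hxy : ‖⟪x, y⟫_𝕜‖ ≤ c * (‖x‖ * ‖y‖)) :
    ‖x‖ ^ 2 + ‖y‖ ^ 2 ≤ (1 + c) * ‖z‖ ^ 2 := by
  set S := ‖x‖ ^ 2 + ‖y‖ ^ 2
  have hxz : re ⟪x, z⟫_𝕜 = ‖x‖ ^ 2 := by
    rw [← sub_add_cancel z x, inner_add_right, hx, zero_add, inner_self_eq_norm_sq]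
  have hyz : re ⟪y, z⟫_𝕜 = ‖y‖ ^ 2 := by
    rw [← sub_add_cancel z y, inner_add_right, hy, zero_add, inner_self_eq_norm_sq]
  have hS : S ≤ ‖x + y‖ * ‖z‖ :=
    calc S = re ⟪x + y, z⟫_𝕜 := by rw [inner_add_left, map_add, hxz, hyz]
      _ ≤ ‖x + y‖ * ‖z‖ := re_inner_le_norm _ _
  have hxy_sq : ‖x + y‖ ^ 2 ≤ (1 + c) * S := by
    have := (re_le_norm ⟪x, y⟫_𝕜).trans hxy
    nlinarith [norm_add_sq (𝕜 := 𝕜) x y, sq_nonneg (‖x‖ - ‖y‖)]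
  have hS_sq : S ^ 2 ≤ (1 + c) * S * ‖z‖ ^ 2 :=
    calc S ^ 2 ≤ ‖x + y‖ ^ 2 * ‖z‖ ^ 2 := by
          rw [← mul_pow]; exact pow_le_pow_left₀ (by positivity) hS 2
      _ ≤ (1 + c) * S * ‖z‖ ^ 2 := by gcongr
  rcases (show 0 ≤ S by positivity).eq_or_lt with hS0 | hS0
  · rw [← hS0]; positivity
  · nlinarith

theorem mul_norm_add_sq_le_of_inner_eq_zero {G : Type*} [SeminormedAddCommGroup F]
    [FunLike G E F] [AddMonoidHomClass G E F] (q : G) (hq : ∀ x, ‖q x‖ ≤ ‖x‖) {h w : E}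
    (hhw : ⟪h, w⟫_𝕜 = 0) {κ : ℝ} (hκ : κ ≤ 1) (hqh : κ * ‖h‖ ^ 2 ≤ ‖q h‖ ^ 2) :
    κ * ‖h + w‖ ^ 2 ≤ 4 * (‖w‖ ^ 2 + ‖q (h + w)‖ ^ 2) := by
  have hqh' : ‖q h‖ ≤ ‖q (h + w)‖ + ‖w‖ :=
    calc ‖q h‖ = ‖q (h + w) - q w‖ := by rw [map_add, add_sub_cancel_right]
      _ ≤ ‖q (h + w)‖ + ‖q w‖ := norm_sub_le _ _
      _ ≤ ‖q (h + w)‖ + ‖w‖ := by gcongr; exact hq w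
  have hpyth := norm_add_sq_eq_norm_sq_add_norm_sq_of_inner_eq_zero h w hhw
  nlinarith [norm_nonneg (q h), sq_nonneg (‖q (h + w)‖ - ‖w‖), sq_nonneg ‖w‖]

theorem norm_inner_le_of_forall_norm_eq_one [NormedAddCommGroup F] [InnerProductSpace 𝕜 F]
    {K : Submodule 𝕜 E} {L : Submodule 𝕜 F} (f : E →ₗ[𝕜] F) {C : ℝ}
    (h : ∀ x ∈ K, ∀ y ∈ L, ‖x‖ = 1 → ‖y‖ = 1 → ‖⟪y, f x⟫_𝕜‖ ≤ C) {x : E} {y : F}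
    (hx : x ∈ K) (hy : y ∈ L) : ‖⟪y, f x⟫_𝕜‖ ≤ C * (‖x‖ * ‖y‖) := by
  rcases eq_or_ne x 0 with rfl | hx0
  · simp
  rcases eq_or_ne y 0 with rfl | hy0
  · simp
  have hC := h _ (K.smul_mem (‖x‖⁻¹ : 𝕜) hx) _ (L.smul_mem (‖y‖⁻¹ : 𝕜) hy)
    (norm_smul_inv_norm hx0) (norm_smul_inv_norm hy0)
  simp only [map_smul, inner_smul_left, inner_smul_right, norm_mul, RCLike.norm_conj, norm_inv,
    norm_ofReal, abs_norm] at hC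
  have hxy : 0 < ‖x‖ * ‖y‖ := by positivity
  calc ‖⟪y, f x⟫_𝕜‖ = (‖x‖ * ‖y‖) * (‖x‖⁻¹ * (‖y‖⁻¹ * ‖⟪y, f x⟫_𝕜‖)) := by field_simp
    _ ≤ (‖x‖ * ‖y‖) * C := by gcongr
    _ = C * (‖x‖ * ‖y‖) := mul_comm _ _

end InnerProductSpace

section StarProjection

variable {𝕜 E : Type*} [RCLike 𝕜] [NormedAddCommGroup E] [InnerProductSpace 𝕜 E]
  [CompleteSpace E] {p q : E →L[𝕜] E}

theorem IsStarProjection.apply_apply (hp : IsStarProjection p) (x : E) : p (p x) = p x :=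
  congrArg (fun f : E →L[𝕜] E => f x) hp.isIdempotentElem.eq

theorem IsStarProjection.inner_apply_apply (hp : IsStarProjection p) (x y : E) :
    ⟪p x, p y⟫_𝕜 = ⟪x, p y⟫_𝕜 := by
  conv_rhs => rw [← hp.apply_apply y]
  exact hp.isSelfAdjoint.isSymmetric x (p y)

theorem IsStarProjection.re_inner_apply_eq_norm_sq (hp : IsStarProjection p) (x : E) :
    re ⟪x, p x⟫_𝕜 = ‖p x‖ ^ 2 := by
  rw [← hp.inner_apply_apply, inner_self_eq_norm_sq]

theorem IsStarProjection.inner_sub_apply_apply_eq_zero (hp : IsStarProjection p) (x : E) :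
    ⟪x - p x, p x⟫_𝕜 = 0 := by
  rw [inner_sub_left, hp.inner_apply_apply, sub_self]

theorem IsStarProjection.norm_apply_le (hp : IsStarProjection p) (x : E) : ‖p x‖ ≤ ‖x‖ :=
  p.le_of_opNorm_le (IsStarProjection.norm_le p hp) x |>.trans_eq (one_mul _)

theorem IsStarProjection.norm_add_apply_sq (hp : IsStarProjection p) (hq : IsStarProjection q)
    (hpq : p * q = 0) (x : E) : ‖(p + q) x‖ ^ 2 = ‖p x‖ ^ 2 + ‖q x‖ ^ 2 := by
  rw [← (hp.add hq hpq).re_inner_apply_eq_norm_sq, ← hp.re_inner_apply_eq_norm_sq,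
    ← hq.re_inner_apply_eq_norm_sq, _root_.add_apply, inner_add_right, map_add]

theorem IsStarProjection.one_sub_mul_norm_sq_le {r : E →L[𝕜] E} (hp : IsStarProjection p)
    (hr : IsStarProjection r) (V : E →ₗᵢ[𝕜] E) {c : ℝ} (hc : 0 ≤ c)
    (hpr : ∀ x y, p x = 0 → r y = 0 → ‖⟪y, V x⟫_𝕜‖ ≤ c * (‖x‖ * ‖y‖)) (z : E) :
    (1 - c) * ‖z‖ ^ 2 ≤ ‖p z‖ ^ 2 + ‖r (V z)‖ ^ 2 := by
  set x := z - p z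
  set y := V z - r (V z)
  have hpx : p x = 0 := by simp [x, hp.apply_apply]
  have hry : r y = 0 := by simp [y, hr.apply_apply]
  have hz : ‖z‖ ^ 2 = ‖x‖ ^ 2 + ‖p z‖ ^ 2 := by
    simpa [sq, x] using norm_add_sq_eq_norm_sq_add_norm_sq_of_inner_eq_zero x (p z)
      (hp.inner_sub_apply_apply_eq_zero z)
  have hVz : ‖z‖ ^ 2 = ‖y‖ ^ 2 + ‖r (V z)‖ ^ 2 := by
    simpa [sq, y] using norm_add_sq_eq_norm_sq_add_norm_sq_of_inner_eq_zero y (r (V z))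
      (hr.inner_sub_apply_apply_eq_zero (V z))
  have hxy : ‖V x‖ ^ 2 + ‖y‖ ^ 2 ≤ (1 + c) * ‖V z‖ ^ 2 := by
    refine norm_sq_add_norm_sq_le_of_inner_sub_eq_zero (𝕜 := 𝕜) ?_ ?_ hc ?_
    · rw [← map_sub, V.inner_map_map, sub_sub_cancel, hp.inner_sub_apply_apply_eq_zero]
    · rw [sub_sub_cancel, hr.inner_sub_apply_apply_eq_zero]
    · rw [norm_inner_symm, V.norm_map]
      exact hpr x y hpx hry
  rw [V.norm_map, V.norm_map] at hxy
  linarith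

end StarProjection

theorem OrthonormalBasis.exists_eq_add_of_apply_eq_smul {𝕜 E ι : Type*} [RCLike 𝕜]
    [NormedAddCommGroup E] [InnerProductSpace 𝕜 E] [Fintype ι] (b : OrthonormalBasis ι 𝕜 E)
    {f : E →ₗ[𝕜] E} {μ : ι → ℝ} (hf : ∀ i, f (b i) = (μ i : 𝕜) • b i) {Δ : ℝ}
    (hΔ : ∀ i, μ i ≠ 0 → Δ ≤ μ i) (x : E) :
    ∃ h w : E, x = h + w ∧ f h = 0 ∧ ⟪h, w⟫_𝕜 = 0 ∧ Δ * ‖w‖ ^ 2 ≤ re ⟪x, f x⟫_𝕜 := by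
  classical
  set c := b.repr x
  have hre : ∀ z : 𝕜, re (conj z * z) = ‖z‖ ^ 2 := fun z => by
    rw [RCLike.conj_mul, ← RCLike.ofReal_pow, RCLike.ofReal_re]
  have hx : x = ∑ i, c i • b i := (b.sum_repr x).symm
  have hfx : f x = ∑ i, ((μ i : 𝕜) * c i) • b i := by
    simp only [hx, map_sum, map_smul, hf, smul_smul, mul_comm]
  set w := ∑ i, (if μ i = 0 then 0 else c i) • b i
  refine ⟨∑ i, (if μ i = 0 then c i else 0) • b i, w, ?_, ?_, ?_, ?_⟩
  · rw [← Finset.sum_add_distrib, hx]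
    refine Finset.sum_congr rfl fun i _ => ?_
    split_ifs <;> simp
  · simp only [map_sum, map_smul, hf]
    refine Finset.sum_eq_zero fun i _ => ?_
    split_ifs with hi <;> simp [hi]
  · rw [b.orthonormal.inner_sum]
    refine Finset.sum_eq_zero fun i _ => ?_
    split_ifs <;> simp
  have hw : ‖w‖ ^ 2 = ∑ i, if μ i = 0 then 0 else ‖c i‖ ^ 2 := by
    rw [← inner_self_eq_norm_sq (𝕜 := 𝕜), b.orthonormal.inner_sum, map_sum]
    refine Finset.sum_congr rfl fun i _ => ?_
    split_ifs
    · simp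
    · exact hre _
  have hxfx : re ⟪x, f x⟫_𝕜 = ∑ i, μ i * ‖c i‖ ^ 2 := by
    rw [hfx, hx, b.orthonormal.inner_sum, map_sum]
    refine Finset.sum_congr rfl fun i _ => ?_
    rw [mul_left_comm, RCLike.re_ofReal_mul, hre]
  rw [hw, hxfx, Finset.mul_sum]
  refine Finset.sum_le_sum fun i _ => ?_
  split_ifs with hi
  · simp [hi]
  · exact mul_le_mul_of_nonneg_right (hΔ i hi) (sq_nonneg _)

namespace Matrix

variable {𝕜 n ι κ : Type*} [RCLike 𝕜] [Fintype n] [Fintype ι] [Fintype κ]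

theorem star_dotProduct_eq_inner (x y : n → 𝕜) : star x ⬝ᵥ y = ⟪toLp 2 x, toLp 2 y⟫_𝕜 := by
  rw [EuclideanSpace.inner_toLp_toLp, dotProduct_comm]

theorem star_dotProduct_self (x : n → 𝕜) : star x ⬝ᵥ x = (‖toLp 2 x‖ : 𝕜) ^ 2 := by
  rw [star_dotProduct_eq_inner, inner_self_eq_norm_sq_to_K]

theorem star_dotProduct_self_eq_one_iff (x : n → 𝕜) : star x ⬝ᵥ x = 1 ↔ ‖toLp 2 x‖ = 1 := by
  rw [star_dotProduct_self, ← RCLike.ofReal_pow, ← RCLike.ofReal_one, RCLike.ofReal_inj,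
    pow_eq_one_iff_of_nonneg (norm_nonneg _) two_ne_zero]

theorem norm_toLp_prod_sq (u : ι × κ → 𝕜) :
    ‖toLp 2 u‖ ^ 2 = ∑ i, ‖toLp 2 (fun k => u (i, k))‖ ^ 2 := by
  simp only [EuclideanSpace.norm_sq_eq, Fintype.sum_prod_type]

variable [DecidableEq n] [DecidableEq ι]

theorem toEuclideanCLM_mem_unitary {W : Matrix n n 𝕜} (hW : W ∈ unitaryGroup n 𝕜) :
    toEuclideanCLM (n := n) (𝕜 := 𝕜) W ∈ unitary (EuclideanSpace 𝕜 n →L[𝕜] EuclideanSpace 𝕜 n) :=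
  Unitary.map_mem _ hW

theorem norm_toLp_mulVec_of_mem_unitaryGroup {W : Matrix n n 𝕜} (hW : W ∈ unitaryGroup n 𝕜)
    (x : n → 𝕜) : ‖toLp 2 (W *ᵥ x)‖ = ‖toLp 2 x‖ :=
  ContinuousLinearMap.norm_map_of_mem_unitary (toEuclideanCLM_mem_unitary hW) (toLp 2 x)

theorem IsHermitian.exists_eq_add_of_le_eigenvalues {A : Matrix n n 𝕜} (hA : A.IsHermitian)
    {Δ : ℝ} (hΔ : ∀ i, hA.eigenvalues i ≠ 0 → Δ ≤ hA.eigenvalues i) (v : n → 𝕜) :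
    ∃ h w : EuclideanSpace 𝕜 n, toLp 2 v = h + w ∧ A *ᵥ ofLp h = 0 ∧ ⟪h, w⟫_𝕜 = 0 ∧
      Δ * ‖w‖ ^ 2 ≤ re (star v ⬝ᵥ A *ᵥ v) := by
  have hf : ∀ i, (toEuclideanCLM (n := n) (𝕜 := 𝕜) A).toLinearMap (hA.eigenvectorBasis i)
      = (hA.eigenvalues i : 𝕜) • hA.eigenvectorBasis i := fun i => by
    apply ofLp_injective 2
    rw [ContinuousLinearMap.coe_coe, ofLp_toEuclideanCLM, mulVec_eigenvectorBasis, ofLp_smul,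
      RCLike.real_smul_eq_coe_smul (K := 𝕜)]
  obtain ⟨h, w, hv, hh, hhw, hw⟩ :=
    hA.eigenvectorBasis.exists_eq_add_of_apply_eq_smul hf hΔ (toLp 2 v)
  refine ⟨h, w, hv, by simpa using congrArg ofLp hh, hhw, ?_⟩
  rwa [star_dotProduct_eq_inner]

theorem norm_toLp_add_mulVec_sq {P Q : Matrix n n 𝕜} (hP : IsStarProjection P)
    (hQ : IsStarProjection Q) (hPQ : P * Q = 0) (x : n → 𝕜) :
    ‖toLp 2 ((P + Q) *ᵥ x)‖ ^ 2 = ‖toLp 2 (P *ᵥ x)‖ ^ 2 + ‖toLp 2 (Q *ᵥ x)‖ ^ 2 := by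
  have h := (hP.map (toEuclideanCLM (n := n) (𝕜 := 𝕜))).norm_add_apply_sq
    (hQ.map (toEuclideanCLM (n := n) (𝕜 := 𝕜))) (by rw [← map_mul, hPQ, map_zero]) (toLp 2 x)
  rwa [← map_add, toEuclideanCLM_toLp, toEuclideanCLM_toLp, toEuclideanCLM_toLp] at h

theorem IsHermitian.mul_re_star_dotProduct_le_add {A Q : Matrix n n 𝕜} (hA : A.IsHermitian)
    {Δ : ℝ} (hΔ : ∀ i, hA.eigenvalues i ≠ 0 → Δ ≤ hA.eigenvalues i) (hΔ0 : 0 ≤ Δ) (hΔ1 : Δ ≤ 1)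
    (hQ : IsStarProjection Q) {κ : ℝ} (hκ : κ ≤ 1)
    (hker : ∀ h, A *ᵥ h = 0 → κ * ‖toLp 2 h‖ ^ 2 ≤ ‖toLp 2 (Q *ᵥ h)‖ ^ 2) (v : n → 𝕜) :
    Δ / 4 * κ * re (star v ⬝ᵥ v) ≤ re (star v ⬝ᵥ (A + Q) *ᵥ v) := by
  obtain ⟨h, w, hv, hh, hhw, hw⟩ := hA.exists_eq_add_of_le_eigenvalues hΔ v
  have hQ' := hQ.map (toEuclideanCLM (n := n) (𝕜 := 𝕜))
  have hgeom := mul_norm_add_sq_le_of_inner_eq_zero _ hQ'.norm_apply_le hhw hκ <| by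
    have := hker (ofLp h) hh
    rwa [toLp_ofLp, ← toEuclideanCLM_toLp, toLp_ofLp] at this
  rw [← hv, toEuclideanCLM_toLp] at hgeom
  have hQv : re (star v ⬝ᵥ Q *ᵥ v) = ‖toLp 2 (Q *ᵥ v)‖ ^ 2 := by
    rw [star_dotProduct_eq_inner, ← toEuclideanCLM_toLp]
    exact hQ'.re_inner_apply_eq_norm_sq _
  have hvv : re (star v ⬝ᵥ v) = ‖toLp 2 v‖ ^ 2 := by
    rw [star_dotProduct_self, ← ofReal_pow, ofReal_re]
  rw [add_mulVec, dotProduct_add, map_add, hQv, hvv]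
  calc Δ / 4 * κ * ‖toLp 2 v‖ ^ 2 = Δ / 4 * (κ * ‖toLp 2 v‖ ^ 2) := by ring
    _ ≤ Δ / 4 * (4 * (‖w‖ ^ 2 + ‖toLp 2 (Q *ᵥ v)‖ ^ 2)) := by gcongr
    _ = Δ * ‖w‖ ^ 2 + Δ * ‖toLp 2 (Q *ᵥ v)‖ ^ 2 := by ring
    _ ≤ re (star v ⬝ᵥ A *ᵥ v) + ‖toLp 2 (Q *ᵥ v)‖ ^ 2 :=
      add_le_add hw (mul_le_of_le_one_left (sq_nonneg _) hΔ1)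

theorem one_sub_sqrt_mul_norm_sq_le {P R W : Matrix n n 𝕜} (hP : IsStarProjection P)
    (hR : IsStarProjection R) (hW : W ∈ unitaryGroup n 𝕜) {ε : ℝ}
    (hacc : ∀ ξ η : n → 𝕜, P *ᵥ ξ = 0 → R *ᵥ η = 0 → star ξ ⬝ᵥ ξ = 1 → star η ⬝ᵥ η = 1 →
      ‖star η ⬝ᵥ W *ᵥ ξ‖ ^ 2 ≤ ε) (ξ : n → 𝕜) :
    (1 - √ε) * ‖toLp 2 ξ‖ ^ 2 ≤ ‖toLp 2 (P *ᵥ ξ)‖ ^ 2 + ‖toLp 2 (R *ᵥ W *ᵥ ξ)‖ ^ 2 := by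
  let p := toEuclideanCLM (n := n) (𝕜 := 𝕜) P
  let r := toEuclideanCLM (n := n) (𝕜 := 𝕜) R
  let V : EuclideanSpace 𝕜 n →ₗᵢ[𝕜] EuclideanSpace 𝕜 n :=
    { (toEuclideanCLM (n := n) (𝕜 := 𝕜) W).toLinearMap with
      norm_map' := ContinuousLinearMap.norm_map_of_mem_unitary (toEuclideanCLM_mem_unitary hW) }
  have key := (hP.map toEuclideanCLM).one_sub_mul_norm_sq_le (hR.map toEuclideanCLM) V
    (Real.sqrt_nonneg ε) (p := p) (r := r) ?_ (toLp 2 ξ)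
  · have hV : V (toLp 2 ξ) = toLp 2 (W *ᵥ ξ) := rfl
    simpa only [hV, p, r, toEuclideanCLM_toLp] using key
  intro x y hx hy
  refine norm_inner_le_of_forall_norm_eq_one (K := LinearMap.ker p.toLinearMap)
    (L := LinearMap.ker r.toLinearMap) V.toLinearMap
    (fun x hx y hy hx1 hy1 => ?_) (LinearMap.mem_ker.mpr hx) (LinearMap.mem_ker.mpr hy)
  have hunit : ∀ z : EuclideanSpace 𝕜 n, ‖z‖ = 1 → star (ofLp z) ⬝ᵥ ofLp z = 1 := fun z hz => by
    rwa [star_dotProduct_self_eq_one_iff, toLp_ofLp]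
  have h := hacc (ofLp x) (ofLp y)
    (by simpa [p, ofLp_toEuclideanCLM] using congrArg ofLp (LinearMap.mem_ker.mp hx))
    (by simpa [r, ofLp_toEuclideanCLM] using congrArg ofLp (LinearMap.mem_ker.mp hy))
    (hunit x hx1) (hunit y hy1)
  rw [star_dotProduct_eq_inner, toLp_ofLp] at h
  exact (abs_norm _).symm.trans_le (Real.abs_le_sqrt h)

theorem isStarProjection_single_kronecker (t : ι) {P : Matrix κ κ 𝕜} (hP : IsStarProjection P) :
    IsStarProjection (single t t (1 : 𝕜) ⊗ₖ P) where
  isIdempotentElem := by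
    rw [IsIdempotentElem, ← mul_kronecker_mul, single_mul_single_same, one_mul,
      hP.isIdempotentElem.eq]
  isSelfAdjoint := by
    rw [IsSelfAdjoint, star_eq_conjTranspose, conjTranspose_kronecker, conjTranspose_single,
      star_one, ← star_eq_conjTranspose, hP.isSelfAdjoint.star_eq]

theorem single_kronecker_mul_single_kronecker_of_ne {s t : ι} (hst : s ≠ t)
    (P R : Matrix κ κ 𝕜) : (single s s (1 : 𝕜) ⊗ₖ P) * (single t t 1 ⊗ₖ R) = 0 := by
  rw [← mul_kronecker_mul, single_mul_single_of_ne (c := (1 : 𝕜)) _ _ _ hst, zero_kronecker]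

theorem single_kronecker_mulVec (t : ι) (M : Matrix κ κ 𝕜) (u : ι × κ → 𝕜) :
    (single t t (1 : 𝕜) ⊗ₖ M) *ᵥ u =
      fun p => if p.1 = t then (M *ᵥ fun k => u (t, k)) p.2 else 0 := by
  ext ⟨s, k⟩
  by_cases hs : s = t
  · subst hs
    simp [mulVec, dotProduct, Fintype.sum_prod_type, single_apply]
  · simp [mulVec, dotProduct, Ne.symm hs, hs]

theorem norm_toLp_single_kronecker_mulVec (t : ι) (M : Matrix κ κ 𝕜) (u : ι × κ → 𝕜) :
    ‖toLp 2 ((single t t (1 : 𝕜) ⊗ₖ M) *ᵥ u)‖ = ‖toLp 2 (M *ᵥ fun k => u (t, k))‖ := by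
  rw [← sq_eq_sq₀ (norm_nonneg _) (norm_nonneg _), norm_toLp_prod_sq, single_kronecker_mulVec,
    Finset.sum_eq_single t (fun s _ hs => by simp [hs, ← Pi.zero_def]) (by simp)]
  simp

end Matrix

noncomputable def endpointPenalty (T d : ℕ) (Pin Pout : Matrix (Fin d) (Fin d) ℂ) :
    Matrix (Fin (T + 1) × Fin d) (Fin (T + 1) × Fin d) ℂ :=
  single 0 0 1 ⊗ₖ Pin + single (Fin.last T) (Fin.last T) 1 ⊗ₖ Pout

section HistoryState

variable {T d : ℕ} {U : ℕ → Matrix (Fin d) (Fin d) ℂ} {Pin Pout : Matrix (Fin d) (Fin d) ℂ}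
  {ψ : Fin (T + 1) → ℂ}

theorem prodU_zero : prodU d U 0 = 1 := rfl

theorem prodU_mem_unitaryGroup (hU : ∀ i, 1 ≤ i → i ≤ T → U i ∈ unitaryGroup (Fin d) ℂ)
    {t : ℕ} (ht : t ≤ T) : prodU d U t ∈ unitaryGroup (Fin d) ℂ := by
  refine Submonoid.list_prod_mem _ fun M hM => ?_
  obtain ⟨i, hi, rfl⟩ := List.mem_map.mp hM
  rw [List.mem_reverse, List.mem_range] at hi
  exact hU (i + 1) (Nat.succ_pos i) (by omega)

theorem norm_toLp_historyState (hU : ∀ i, 1 ≤ i → i ≤ T → U i ∈ unitaryGroup (Fin d) ℂ)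
    (hψ : star ψ ⬝ᵥ ψ = 1) (ξ : Fin d → ℂ) :
    ‖toLp 2 (historyState T d U ψ ξ)‖ = ‖toLp 2 ξ‖ := by
  have hψ' : ∑ t, ‖ψ t‖ ^ 2 = 1 := by
    rw [← EuclideanSpace.norm_sq_eq, (star_dotProduct_self_eq_one_iff ψ).mp hψ, one_pow]
  rw [← sq_eq_sq₀ (norm_nonneg _) (norm_nonneg _), norm_toLp_prod_sq]
  calc ∑ t, ‖toLp 2 (fun k => historyState T d U ψ ξ (t, k))‖ ^ 2
      = ∑ t, ‖ψ t‖ ^ 2 * ‖toLp 2 ξ‖ ^ 2 := by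
        refine Finset.sum_congr rfl fun t _ => ?_
        change ‖toLp 2 (ψ t • (prodU d U t *ᵥ ξ))‖ ^ 2 = _
        rw [toLp_smul, norm_smul, mul_pow,
          norm_toLp_mulVec_of_mem_unitaryGroup (prodU_mem_unitaryGroup hU (Fin.is_le t))]
    _ = ‖toLp 2 ξ‖ ^ 2 := by rw [← Finset.sum_mul, hψ', one_mul]

theorem zero_ne_last_of_one_le (hT : 1 ≤ T) : (0 : Fin (T + 1)) ≠ Fin.last T :=
  Fin.ext_iff.not.mpr (by simp; omega)

theorem isStarProjection_endpointPenalty (hT : 1 ≤ T) (hPin : IsStarProjection Pin)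
    (hPout : IsStarProjection Pout) : IsStarProjection (endpointPenalty T d Pin Pout) :=
  (isStarProjection_single_kronecker _ hPin).add (isStarProjection_single_kronecker _ hPout)
    (single_kronecker_mul_single_kronecker_of_ne (zero_ne_last_of_one_le hT) _ _)

theorem norm_endpointPenalty_mulVec_historyState_sq (hT : 1 ≤ T) (hPin : IsStarProjection Pin)
    (hPout : IsStarProjection Pout) (ξ : Fin d → ℂ) :
    ‖toLp 2 (endpointPenalty T d Pin Pout *ᵥ historyState T d U ψ ξ)‖ ^ 2
      = ‖ψ 0‖ ^ 2 * ‖toLp 2 (Pin *ᵥ ξ)‖ ^ 2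
        + ‖ψ (Fin.last T)‖ ^ 2 * ‖toLp 2 (Pout *ᵥ prodU d U T *ᵥ ξ)‖ ^ 2 := by
  rw [endpointPenalty, norm_toLp_add_mulVec_sq (isStarProjection_single_kronecker _ hPin)
    (isStarProjection_single_kronecker _ hPout)
    (single_kronecker_mul_single_kronecker_of_ne (zero_ne_last_of_one_le hT) _ _),
    norm_toLp_single_kronecker_mulVec, norm_toLp_single_kronecker_mulVec]
  change ‖toLp 2 (Pin *ᵥ ψ 0 • (prodU d U 0 *ᵥ ξ))‖ ^ 2
    + ‖toLp 2 (Pout *ᵥ ψ (Fin.last T) • (prodU d U T *ᵥ ξ))‖ ^ 2 = _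
  rw [prodU_zero, one_mulVec, mulVec_smul, mulVec_smul, toLp_smul, toLp_smul, norm_smul,
    norm_smul, mul_pow, mul_pow]

theorem mul_norm_historyState_sq_le (hT : 1 ≤ T)
    (hU : ∀ i, 1 ≤ i → i ≤ T → U i ∈ unitaryGroup (Fin d) ℂ)
    (hPin : IsStarProjection Pin) (hPout : IsStarProjection Pout) {ε : ℝ}
    (hacc : ∀ ξ η : Fin d → ℂ, Pin *ᵥ ξ = 0 → Pout *ᵥ η = 0 →
      star ξ ⬝ᵥ ξ = 1 → star η ⬝ᵥ η = 1 → ‖star η ⬝ᵥ prodU d U T *ᵥ ξ‖ ^ 2 ≤ ε)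
    (hψ : star ψ ⬝ᵥ ψ = 1) (ξ : Fin d → ℂ) :
    (1 - √ε) * min (‖ψ 0‖ ^ 2) (‖ψ (Fin.last T)‖ ^ 2) * ‖toLp 2 (historyState T d U ψ ξ)‖ ^ 2
      ≤ ‖toLp 2 (endpointPenalty T d Pin Pout *ᵥ historyState T d U ψ ξ)‖ ^ 2 := by
  rw [norm_endpointPenalty_mulVec_historyState_sq hT hPin hPout, norm_toLp_historyState hU hψ]
  have hξ := one_sub_sqrt_mul_norm_sq_le hPin hPout (prodU_mem_unitaryGroup hU le_rfl) hacc ξ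
  set m := min (‖ψ 0‖ ^ 2) (‖ψ (Fin.last T)‖ ^ 2)
  have hm : 0 ≤ m := le_min (sq_nonneg _) (sq_nonneg _)
  calc (1 - √ε) * m * ‖toLp 2 ξ‖ ^ 2 = m * ((1 - √ε) * ‖toLp 2 ξ‖ ^ 2) := by ring
    _ ≤ m * (‖toLp 2 (Pin *ᵥ ξ)‖ ^ 2 + ‖toLp 2 (Pout *ᵥ prodU d U T *ᵥ ξ)‖ ^ 2) := by gcongr
    _ ≤ _ := by
      rw [mul_add]
      gcongr
      exacts [min_le_left _ _, min_le_right _ _]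

end HistoryState

theorem stmt3_general (T d : ℕ) (hT : 1 ≤ T)
    (U : ℕ → Matrix (Fin d) (Fin d) ℂ)
    (hU : ∀ i, 1 ≤ i → i ≤ T → U i ∈ Matrix.unitaryGroup (Fin d) ℂ)
    (Pin Pout : Matrix (Fin d) (Fin d) ℂ)
    (hPin : Pin.IsHermitian) (hPin2 : Pin * Pin = Pin)
    (hPout : Pout.IsHermitian) (hPout2 : Pout * Pout = Pout)
    (ε : ℝ)
    (hacc : ∀ ξ η : Fin d → ℂ, Pin.mulVec ξ = 0 → Pout.mulVec η = 0 →
      star ξ ⬝ᵥ ξ = 1 → star η ⬝ᵥ η = 1 →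
      ‖star η ⬝ᵥ (prodU d U T).mulVec ξ‖ ^ 2 ≤ ε)
    (ψ : Fin (T + 1) → ℂ) (hψ : star ψ ⬝ᵥ ψ = 1)
    (Hp : Matrix (Fin (T + 1) × Fin d) (Fin (T + 1) × Fin d) ℂ)
    (hHp : Hp.PosSemidef)
    (hker : ∀ v : Fin (T + 1) × Fin d → ℂ,
      Hp.mulVec v = 0 ↔ ∃ ξ : Fin d → ℂ, v = historyState T d U ψ ξ)
    (Δ : ℝ)
    (hΔ : IsLeast {r : ℝ | (∃ i, hHp.1.eigenvalues i = r) ∧ r ≠ 0} Δ)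
    (hΔ1 : Δ ≤ 1) :
    ∀ v : Fin (T + 1) × Fin d → ℂ,
      Δ / 4 * (1 - Real.sqrt ε)
          * min (‖ψ 0‖ ^ 2) (‖ψ (Fin.last T)‖ ^ 2)
          * (star v ⬝ᵥ v).re
        ≤ (star v ⬝ᵥ
            (Hp + Matrix.single (0 : Fin (T + 1)) (0 : Fin (T + 1)) (1 : ℂ) ⊗ₖ Pin
              + Matrix.single (Fin.last T) (Fin.last T) (1 : ℂ) ⊗ₖ Pout).mulVec
              v).re := by
  intro v
  have hPin' : IsStarProjection Pin := ⟨hPin2, hPin⟩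
  have hPout' : IsStarProjection Pout := ⟨hPout2, hPout⟩
  have hΔ0 : 0 ≤ Δ := by
    obtain ⟨⟨i, hi⟩, -⟩ := hΔ.1
    exact hi ▸ hHp.eigenvalues_nonneg i
  have hψ0 : ‖ψ 0‖ ^ 2 ≤ 1 := pow_le_one₀ (norm_nonneg _) <|
    (star_dotProduct_self_eq_one_iff ψ).mp hψ ▸ PiLp.norm_apply_le (toLp 2 ψ) 0
  have hκ : (1 - √ε) * min (‖ψ 0‖ ^ 2) (‖ψ (Fin.last T)‖ ^ 2) ≤ 1 := by
    nlinarith [Real.sqrt_nonneg ε, min_le_left (‖ψ 0‖ ^ 2) (‖ψ (Fin.last T)‖ ^ 2),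
      le_min (sq_nonneg ‖ψ 0‖) (sq_nonneg ‖ψ (Fin.last T)‖)]
  rw [mul_assoc (Δ / 4), add_assoc]
  refine hHp.1.mul_re_star_dotProduct_le_add (fun i hi => hΔ.2 ⟨⟨i, rfl⟩, hi⟩) hΔ0 hΔ1
    (isStarProjection_endpointPenalty hT hPin' hPout') hκ (fun h hh => ?_) v
  obtain ⟨ξ, rfl⟩ := (hker h).1 hh
  exact mul_norm_historyState_sq_le hT hU hPin' hPout' hacc hψ ξ

theorem stmt3 (T d : ℕ) (hT : 1 ≤ T) (hd : 1 ≤ d)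
    (U : ℕ → Matrix (Fin d) (Fin d) ℂ)
    (hU : ∀ i, 1 ≤ i → i ≤ T → U i ∈ Matrix.unitaryGroup (Fin d) ℂ)
    (Pin Pout : Matrix (Fin d) (Fin d) ℂ)
    (hPin : Pin.IsHermitian) (hPin2 : Pin * Pin = Pin)
    (hPout : Pout.IsHermitian) (hPout2 : Pout * Pout = Pout)
    (ε : ℝ) (hε0 : 0 ≤ ε) (hε1 : ε < 1)
    (hacc : ∀ ξ η : Fin d → ℂ, Pin.mulVec ξ = 0 → Pout.mulVec η = 0 →
      star ξ ⬝ᵥ ξ = 1 → star η ⬝ᵥ η = 1 →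
      ‖star η ⬝ᵥ (prodU d U T).mulVec ξ‖ ^ 2 ≤ ε)
    (ψ : Fin (T + 1) → ℂ) (hψ : star ψ ⬝ᵥ ψ = 1)
    (Hp : Matrix (Fin (T + 1) × Fin d) (Fin (T + 1) × Fin d) ℂ)
    (hHp : Hp.PosSemidef)
    (hker : ∀ v : Fin (T + 1) × Fin d → ℂ,
      Hp.mulVec v = 0 ↔ ∃ ξ : Fin d → ℂ, v = historyState T d U ψ ξ)
    (Δ : ℝ)
    (hΔ : IsLeast {r : ℝ | (∃ i, hHp.1.eigenvalues i = r) ∧ r ≠ 0} Δ)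
    (hΔ1 : Δ ≤ 1) :
    ∀ v : Fin (T + 1) × Fin d → ℂ,
      Δ / 4 * (1 - Real.sqrt ε)
          * min (‖ψ 0‖ ^ 2) (‖ψ (Fin.last T)‖ ^ 2)
          * (star v ⬝ᵥ v).re
        ≤ (star v ⬝ᵥ
            (Hp + Matrix.single (0 : Fin (T + 1)) (0 : Fin (T + 1)) (1 : ℂ) ⊗ₖ Pin
              + Matrix.single (Fin.last T) (Fin.last T) (1 : ℂ) ⊗ₖ Pout).mulVec
              v).re :=
  stmt3_general T d hT U hU Pin Pout hPin hPin2 hPout hPout2 ε hacc ψ hψ Hp hHp hker Δ hΔ hΔ1
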